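/- arXiv:1808.01440 — 2 statements merged into one kernel-verified Lean document; each statement's English description precedes it below -/
import Mathlib

section
/- Let W = {(W_i, ω_i)}_{i∈I} be a Bessel fusion sequence in a Hilbert space H. Then W is a K-fusion frame for H (i.e., satisfies the lower bound A‖K*f‖² ≤ Σ ω_i²‖π_{W_i}f‖² for some A > 0) if and only if R(K) ⊆ R(T_W), where T_W is the synthesis operator T_W({f_i}) = Σ_{i∈I} ω_i f_i on (Σ⊕W_i)_{ℓ²}. -/
/-!
Writing `T_W` for the synthesis operator, `T_W* f = (ω_i π_{W_i} f)_i`, so the frame sum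
`Σ ω_i² ‖π_{W_i} f‖²` is exactly `‖T_W* f‖²`. The lower K-frame bound therefore says
`‖K* f‖ ≤ c ‖T_W* f‖`, and the theorem is an instance of Douglas' lemma:
`R(K) ⊆ R(T)` iff `‖K* f‖ ≤ c ‖T* f‖` for all `f`.

For Douglas' lemma, a majorization makes `T* f ↦ ⟪K x, f⟫` a well-defined bounded functional on
`R(T*)`; a Hahn–Banach extension of it is represented by some `y` with `T y = K x`. Conversely,
if `R(K) ⊆ R(T)`, the open mapping theorem applied to `{(y, x) | T y = K x} → G` gives
preimages with `‖y‖ ≤ C ‖x‖`; taking `x = K* f` yields `‖K* f‖² = re ⟪y, T* f⟫ ≤ C ‖K* f‖ ‖T* f‖`.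
-/

open scoped InnerProductSpace
open ContinuousLinearMap (adjoint)

noncomputable def proj {H : Type*} [NormedAddCommGroup H] [InnerProductSpace ℂ H]
    (U : Submodule ℂ H) [U.HasOrthogonalProjection] : H →L[ℂ] H :=
  U.subtypeL.comp (U.orthogonalProjectionOnto)

variable {H : Type*} [NormedAddCommGroup H] [InnerProductSpace ℂ H] [CompleteSpace H]
  [TopologicalSpace.SeparableSpace H]

theorem exists_pos_mul_sq_le_iff_exists_le_mul {α : Type*} {a b : α → ℝ} (ha : ∀ x, 0 ≤ a x)
    (hb : ∀ x, 0 ≤ b x) :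
    (∃ A, 0 < A ∧ ∀ x, A * a x ^ 2 ≤ b x ^ 2) ↔ ∃ c, ∀ x, a x ≤ c * b x := by
  constructor
  · rintro ⟨A, hA, h⟩
    refine ⟨(√A)⁻¹, fun x ↦ ?_⟩
    rw [le_inv_mul_iff₀ (by positivity),
      ← pow_le_pow_iff_left₀ (mul_nonneg (Real.sqrt_nonneg A) (ha x)) (hb x) two_ne_zero,
      mul_pow, Real.sq_sqrt hA.le]
    exact h x
  · rintro ⟨c, h⟩
    refine ⟨(c ^ 2 + 1)⁻¹, by positivity, fun x ↦ ?_⟩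
    rw [inv_mul_le_iff₀ (by positivity)]
    nlinarith [h x, ha x, sq_nonneg (b x)]

section Douglas

variable {𝕜 : Type*} [RCLike 𝕜]

theorem StrongDual.exists_comp_eq_of_norm_le {E F : Type*} [NormedAddCommGroup E]
    [NormedSpace 𝕜 E] [AddCommGroup F] [Module 𝕜 F] (A : F →ₗ[𝕜] E) (ψ : F →ₗ[𝕜] 𝕜) (C : ℝ)
    (hψ : ∀ f, ‖ψ f‖ ≤ C * ‖A f‖) : ∃ g : StrongDual 𝕜 E, ∀ f, g (A f) = ψ f := by
  have hker : LinearMap.ker A ≤ LinearMap.ker ψ := fun f hf ↦ by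
    have := hψ f
    rw [LinearMap.mem_ker.mp hf, norm_zero, mul_zero] at this
    exact LinearMap.mem_ker.mpr (norm_le_zero_iff.mp this)
  let φ : LinearMap.range A →ₗ[𝕜] 𝕜 :=
    (LinearMap.ker A).liftQ ψ hker ∘ₗ A.quotKerEquivRange.symm.toLinearMap
  have hφ : ∀ f, φ ⟨A f, LinearMap.mem_range_self A f⟩ = ψ f := fun f ↦ by
    simp [φ]
  have hφ_le : ∀ z, ‖φ z‖ ≤ C * ‖z‖ := by
    rintro ⟨_, f, rfl⟩
    exact (hφ f).symm ▸ hψ f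
  obtain ⟨g, hg, -⟩ := exists_extension_norm_eq _ (φ.mkContinuous C hφ_le)
  exact ⟨g, fun f ↦ (hg _).trans (hφ f)⟩

theorem exists_preimage_norm_le_of_range_le {E F G : Type*} [NormedAddCommGroup E]
    [NormedSpace 𝕜 E] [CompleteSpace E] [NormedAddCommGroup F] [NormedSpace 𝕜 F]
    [NormedAddCommGroup G] [NormedSpace 𝕜 G] [CompleteSpace G]
    (T : E →L[𝕜] F) (K : G →L[𝕜] F)
    (h : LinearMap.range (K : G →ₗ[𝕜] F) ≤ LinearMap.range (T : E →ₗ[𝕜] F)) :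
    ∃ C > 0, ∀ x, ∃ y, T y = K x ∧ ‖y‖ ≤ C * ‖x‖ := by
  let M := LinearMap.ker
    ((T.comp (.fst 𝕜 E G) - K.comp (.snd 𝕜 E G) : E × G →L[𝕜] F) : E × G →ₗ[𝕜] F)
  have : CompleteSpace M := (ContinuousLinearMap.isClosed_ker _).completeSpace_coe
  have hM : ∀ p : E × G, p ∈ M ↔ T p.1 = K p.2 := fun p ↦ by
    simp [M, sub_eq_zero]
  have hsurj : Function.Surjective ((ContinuousLinearMap.snd 𝕜 E G).comp M.subtypeL) := by
    intro x
    obtain ⟨y, hy⟩ := h ⟨x, rfl⟩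
    exact ⟨⟨(y, x), (hM _).mpr hy⟩, rfl⟩
  obtain ⟨C, hC_pos, hC⟩ := ContinuousLinearMap.exists_preimage_norm_le _ hsurj
  refine ⟨C, hC_pos, fun x ↦ ?_⟩
  obtain ⟨⟨p, hp⟩, rfl, hle⟩ := hC x
  exact ⟨p.1, (hM p).mp hp, (norm_fst_le p).trans hle⟩

variable {E F G : Type*}
  [NormedAddCommGroup E] [InnerProductSpace 𝕜 E] [CompleteSpace E]
  [NormedAddCommGroup F] [InnerProductSpace 𝕜 F] [CompleteSpace F]
  [NormedAddCommGroup G] [InnerProductSpace 𝕜 G] [CompleteSpace G]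

theorem range_le_range_of_norm_adjoint_le (T : E →L[𝕜] F) (K : G →L[𝕜] F) (c : ℝ)
    (h : ∀ f, ‖adjoint K f‖ ≤ c * ‖adjoint T f‖) :
    LinearMap.range (K : G →ₗ[𝕜] F) ≤ LinearMap.range (T : E →ₗ[𝕜] F) := by
  rintro _ ⟨x, rfl⟩
  obtain ⟨g, hg⟩ := StrongDual.exists_comp_eq_of_norm_le (adjoint T : F →ₗ[𝕜] E)
    (innerₛₗ 𝕜 (K x)) (‖x‖ * c) fun f ↦
      calc ‖⟪K x, f⟫_𝕜‖ = ‖⟪x, adjoint K f⟫_𝕜‖ := by rw [K.adjoint_inner_right]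
        _ ≤ ‖x‖ * ‖adjoint K f‖ := norm_inner_le_norm _ _
        _ ≤ ‖x‖ * (c * ‖adjoint T f‖) := by gcongr; exact h f
        _ = ‖x‖ * c * ‖adjoint T f‖ := by ring
  refine ⟨(InnerProductSpace.toDual 𝕜 E).symm g, ext_inner_right 𝕜 fun f ↦ ?_⟩
  change ⟪T _, f⟫_𝕜 = ⟪K x, f⟫_𝕜
  rw [← T.adjoint_inner_right, InnerProductSpace.toDual_symm_apply]
  exact hg f

theorem norm_adjoint_le_of_range_le (T : E →L[𝕜] F) (K : G →L[𝕜] F)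
    (h : LinearMap.range (K : G →ₗ[𝕜] F) ≤ LinearMap.range (T : E →ₗ[𝕜] F)) :
    ∃ c, ∀ f, ‖adjoint K f‖ ≤ c * ‖adjoint T f‖ := by
  obtain ⟨C, hC_pos, hC⟩ := exists_preimage_norm_le_of_range_le T K h
  refine ⟨C, fun f ↦ ?_⟩
  obtain ⟨y, hy, hy_le⟩ := hC (adjoint K f)
  have hsq : ‖adjoint K f‖ ^ 2 ≤ C * ‖adjoint K f‖ * ‖adjoint T f‖ :=
    calc ‖adjoint K f‖ ^ 2 = RCLike.re ⟪y, adjoint T f⟫_𝕜 := by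
          rw [T.adjoint_inner_right, hy, ← K.adjoint_inner_right, inner_self_eq_norm_sq]
      _ ≤ ‖y‖ * ‖adjoint T f‖ := re_inner_le_norm _ _
      _ ≤ C * ‖adjoint K f‖ * ‖adjoint T f‖ := by gcongr
  rcases (norm_nonneg (adjoint K f)).eq_or_lt with h0 | hpos
  · rw [← h0]
    positivity
  · nlinarith

theorem range_le_range_iff_exists_norm_adjoint_le (T : E →L[𝕜] F) (K : G →L[𝕜] F) :
    LinearMap.range (K : G →ₗ[𝕜] F) ≤ LinearMap.range (T : E →ₗ[𝕜] F) ↔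
      ∃ c, ∀ f, ‖adjoint K f‖ ≤ c * ‖adjoint T f‖ :=
  ⟨norm_adjoint_le_of_range_le T K, fun ⟨c, h⟩ ↦ range_le_range_of_norm_adjoint_le T K c h⟩

end Douglas

section Synthesis

variable {ι V : Type*} [NormedAddCommGroup V] [InnerProductSpace ℂ V] {W : ι → Submodule ℂ V}

def IsSynthesisOperator (ω : ι → ℝ) (T : lp (fun i => W i) 2 →L[ℂ] V) : Prop :=
  ∀ g : lp (fun i => W i) 2, HasSum (fun i => ω i • (g i : V)) (T g)

variable {ω : ι → ℝ} {T : lp (fun i => W i) 2 →L[ℂ] V}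

theorem IsSynthesisOperator.apply_single [DecidableEq ι] (hT : IsSynthesisOperator ω T)
    (i : ι) (w : W i) : T (lp.single 2 i w) = ω i • (w : V) := by
  refine (hT _).unique ?_
  convert hasSum_ite_eq i (ω i • (w : V)) using 2 with j
  by_cases hj : j = i
  · subst hj; simp
  · simp [hj]

variable [CompleteSpace V] [∀ i, CompleteSpace (W i)]

theorem IsSynthesisOperator.adjoint_apply (hT : IsSynthesisOperator ω T) (f : V) (i : ι) :
    adjoint T f i = (ω i : ℂ) • (W i).orthogonalProjectionOnto f := by
  classical
  refine ext_inner_right ℂ fun w ↦ ?_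
  rw [← lp.inner_single_right, T.adjoint_inner_left, hT.apply_single, inner_smul_left,
    Submodule.inner_orthogonalProjectionOnto_eq_of_mem_right, Complex.conj_ofReal,
    ← Complex.coe_smul, inner_smul_right]

theorem IsSynthesisOperator.norm_adjoint_sq (hT : IsSynthesisOperator ω T) (f : V) :
    ‖adjoint T f‖ ^ 2 = ∑' i, ω i ^ 2 * ‖proj (W i) f‖ ^ 2 := by
  have hnorm := lp.norm_rpow_eq_tsum (p := 2) (by norm_num) (adjoint T f)
  simp only [ENNReal.toReal_ofNat, Real.rpow_two] at hnorm
  rw [hnorm]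
  refine tsum_congr fun i ↦ ?_
  rw [hT.adjoint_apply, norm_smul, Complex.norm_real, Real.norm_eq_abs, mul_pow, sq_abs]
  rfl

end Synthesis

theorem bessel_fusion_is_K_fusion_iff_range_subset_general {ι : Type*}
    (K : H →L[ℂ] H) (W : ι → Submodule ℂ H) [∀ i, CompleteSpace (W i)]
    (ω : ι → ℝ)
    (TW : lp (fun i => W i) 2 →L[ℂ] H)
    (hTW : ∀ g : lp (fun i => W i) 2, HasSum (fun i => ω i • ((g i : H))) (TW g)) :
    (∃ A : ℝ, 0 < A ∧ ∀ f : H,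
        A * ‖adjoint K f‖ ^ 2 ≤ ∑' i, ω i ^ 2 * ‖proj (W i) f‖ ^ 2) ↔
      LinearMap.range (K : H →ₗ[ℂ] H) ≤ LinearMap.range (TW : lp (fun i => W i) 2 →ₗ[ℂ] H) := by
  have hT : IsSynthesisOperator ω TW := hTW
  simp_rw [← hT.norm_adjoint_sq]
  rw [exists_pos_mul_sq_le_iff_exists_le_mul (fun _ ↦ norm_nonneg _) (fun _ ↦ norm_nonneg _),
    range_le_range_iff_exists_norm_adjoint_le]

theorem bessel_fusion_is_K_fusion_iff_range_subset {ι : Type*} [Countable ι]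
    (K : H →L[ℂ] H) (W : ι → Submodule ℂ H) [∀ i, CompleteSpace (W i)]
    (ω : ι → ℝ) (hω : ∀ i, 0 < ω i) (B : ℝ) (hB : 0 < B)
    (hBessel : ∀ f : H, ∑' i, ω i ^ 2 * ‖proj (W i) f‖ ^ 2 ≤ B * ‖f‖ ^ 2)
    (TW : lp (fun i => W i) 2 →L[ℂ] H)
    (hTW : ∀ g : lp (fun i => W i) 2, HasSum (fun i => ω i • ((g i : H))) (TW g)) :
    (∃ A : ℝ, 0 < A ∧ ∀ f : H,
        A * ‖adjoint K f‖ ^ 2 ≤ ∑' i, ω i ^ 2 * ‖proj (W i) f‖ ^ 2) ↔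
      LinearMap.range (K : H →ₗ[ℂ] H) ≤ LinearMap.range (TW : lp (fun i => W i) 2 →ₗ[ℂ] H) :=
  bessel_fusion_is_K_fusion_iff_range_subset_general K W ω TW hTW
end

section
/- Let W = {(W_i, ω_i)}_{i∈I} be a Bessel fusion sequence in H with W_i ⊆ S_W(R(K)) for all i ∈ I, where K ∈ B(H) has closed range and S_W restricted to R(K) is invertible onto S_W(R(K)). Then the family W̃ = {(K* S_W^{-1} π_{S_W(R(K))} W_i, ω_i)}_{i∈I} is a Bessel fusion sequence and satisfies Kf = Σ_{i∈I} ω_i² π_{R(K)} π_{W_i} (S_W^{-1})* K π_{W̃_i} f for all f ∈ H; that is, W̃ is a K-dual of W. -/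
open scoped InnerProductSpace
open ContinuousLinearMap (adjoint)

variable {H : Type*} [NormedAddCommGroup H] [InnerProductSpace ℂ H] [CompleteSpace H]
  [TopologicalSpace.SeparableSpace H]

/-! Put `M = K* S_W⁻¹ π_{S_W(R(K))}`, so that `W̃ᵢ` is the closure of `M Wᵢ` and
`M* = π_{S_W(R(K))} (S_W⁻¹)* K`. Since `R(K)` is closed, `K*` is bounded below on `R(K)`, hence
`M` is bounded below on `S_W(R(K)) ⊇ Wᵢ`; this gives `‖π_{W̃ᵢ} f‖ ≤ c ‖π_{Wᵢ} M* f‖`, and the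
Bessel bound of `W̃` follows from that of `W`. As `f - π_{W̃ᵢ} f ⊥ M Wᵢ`, it is killed by
`π_{Wᵢ} M*`, so the `i`-th term of the series is `ω_i² π_{R(K)} π_{Wᵢ} g` with
`g = (S_W⁻¹)* K f`. These sum to `π_{R(K)} S_W g = K f`: `S_W g - K f ⊥ R(K)` because `S_W` is
symmetric and `S_W⁻¹ S_W` is the identity on `R(K)`. -/

theorem proj_eq_starProjection {E : Type*} [NormedAddCommGroup E] [InnerProductSpace ℂ E]
    (U : Submodule ℂ E) [U.HasOrthogonalProjection] : proj U = U.starProjection := rfl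

section ClosedRange

variable {𝕜 E F : Type*} [RCLike 𝕜] [NormedAddCommGroup E] [InnerProductSpace 𝕜 E]
  [CompleteSpace E] [NormedAddCommGroup F] [InnerProductSpace 𝕜 F] [CompleteSpace F]

theorem exists_norm_le_mul_norm_adjoint_of_mem_range (T : E →L[𝕜] F)
    [CompleteSpace (LinearMap.range (T : E →ₗ[𝕜] F))] :
    ∃ C > 0, ∀ u ∈ LinearMap.range (T : E →ₗ[𝕜] F), ‖u‖ ≤ C * ‖adjoint T u‖ := by
  obtain ⟨C, hC, hpre⟩ := ContinuousLinearMap.exists_preimage_norm_le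
    (T.codRestrict _ (LinearMap.mem_range_self (T : E →ₗ[𝕜] F)))
    (by rintro ⟨_, x, rfl⟩; exact ⟨x, rfl⟩)
  refine ⟨C, hC, fun u hu => ?_⟩
  obtain ⟨x, hx, hxu⟩ := hpre ⟨u, hu⟩
  replace hx : T x = u := congrArg Subtype.val hx
  rcases (norm_nonneg u).eq_or_lt with hu0 | hu0
  · rw [← hu0]; positivity
  refine le_of_mul_le_mul_left ?_ hu0
  calc ‖u‖ * ‖u‖ = ‖⟪adjoint T u, x⟫_𝕜‖ := by
        rw [ContinuousLinearMap.adjoint_inner_left, hx, ← inner_self_re_eq_norm,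
          inner_self_eq_norm_mul_norm]
    _ ≤ ‖adjoint T u‖ * (C * ‖u‖) := (norm_inner_le_norm _ _).trans (by gcongr; simpa using hxu)
    _ = ‖u‖ * (C * ‖adjoint T u‖) := by ring

theorem norm_le_mul_norm_adjoint_apply_of_mem_map_range {K S Sinv : E →L[𝕜] E} {C : ℝ}
    (hC : ∀ u ∈ LinearMap.range (K : E →ₗ[𝕜] E), ‖u‖ ≤ C * ‖adjoint K u‖)
    (hinv1 : ∀ x ∈ LinearMap.range (K : E →ₗ[𝕜] E), Sinv (S x) = x)
    (hinv2 : ∀ y ∈ (LinearMap.range (K : E →ₗ[𝕜] E)).map (S : E →ₗ[𝕜] E), S (Sinv y) = y)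
    {v : E} (hv : v ∈ (LinearMap.range (K : E →ₗ[𝕜] E)).map (S : E →ₗ[𝕜] E)) :
    ‖v‖ ≤ ‖S‖ * C * ‖adjoint K (Sinv v)‖ := by
  have hKv : Sinv v ∈ LinearMap.range (K : E →ₗ[𝕜] E) := by
    obtain ⟨x, hx, rfl⟩ := hv
    rwa [ContinuousLinearMap.coe_coe, hinv1 x hx]
  calc ‖v‖ = ‖S (Sinv v)‖ := by rw [hinv2 v hv]
    _ ≤ ‖S‖ * (C * ‖adjoint K (Sinv v)‖) := (S.le_opNorm _).trans (by gcongr; exact hC _ hKv)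
    _ = ‖S‖ * C * ‖adjoint K (Sinv v)‖ := by ring

end ClosedRange

section Projection

open Submodule

variable {𝕜 E F : Type*} [RCLike 𝕜] [NormedAddCommGroup E] [InnerProductSpace 𝕜 E]
  [NormedAddCommGroup F] [InnerProductSpace 𝕜 F]

theorem Submodule.norm_starProjection_le_of_forall_norm_inner_le (U : Submodule 𝕜 E)
    [U.HasOrthogonalProjection] {f : E} {a : ℝ} (ha : 0 ≤ a)
    (h : ∀ w ∈ U, ‖⟪f, w⟫_𝕜‖ ≤ a * ‖w‖) : ‖U.starProjection f‖ ≤ a := by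
  set p := U.starProjection f
  rcases (norm_nonneg p).eq_or_lt with hp | hp
  · rw [← hp]; exact ha
  refine le_of_mul_le_mul_left ?_ hp
  have hpp : ⟪p, p⟫_𝕜 = ⟪f, p⟫_𝕜 := by
    rw [U.inner_starProjection_left_eq_right,
      U.starProjection_eq_self_iff.mpr (U.starProjection_apply_mem f)]
  calc ‖p‖ * ‖p‖ = RCLike.re ⟪f, p⟫_𝕜 := by rw [← hpp, inner_self_eq_norm_mul_norm]
    _ ≤ ‖⟪f, p⟫_𝕜‖ := RCLike.re_le_norm _
    _ ≤ a * ‖p‖ := h p (U.starProjection_apply_mem f)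
    _ = ‖p‖ * a := mul_comm _ _

variable [CompleteSpace E] [CompleteSpace F]

theorem Submodule.starProjection_adjoint_comp_starProjection_of_le {U V : Submodule 𝕜 E}
    [U.HasOrthogonalProjection] [V.HasOrthogonalProjection] (h : U ≤ V) (T : E →L[𝕜] F)
    (x : F) :
    U.starProjection (adjoint (T ∘L V.starProjection) x) = U.starProjection (adjoint T x) := by
  rw [ContinuousLinearMap.adjoint_comp, (isSelfAdjoint_starProjection V).adjoint_eq,
    ContinuousLinearMap.comp_apply]
  exact DFunLike.congr_fun (starProjection_comp_starProjection_of_le h) _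

variable (M : E →L[𝕜] F) (W : Submodule 𝕜 E)

theorem norm_inner_le_of_mem_topologicalClosure_map [W.HasOrthogonalProjection] {c : ℝ}
    (hM : ∀ v ∈ W, ‖v‖ ≤ c * ‖M v‖) (f : F) :
    ∀ w ∈ (W.map (M : E →ₗ[𝕜] F)).topologicalClosure,
      ‖⟪f, w⟫_𝕜‖ ≤ c * ‖W.starProjection (adjoint M f)‖ * ‖w‖ := by
  have hclosed : IsClosed {w : F | ‖⟪f, w⟫_𝕜‖ ≤ c * ‖W.starProjection (adjoint M f)‖ * ‖w‖} :=
    isClosed_le (continuous_const.inner continuous_id).norm (continuous_const.mul continuous_norm)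
  intro w hw
  rw [← SetLike.mem_coe, topologicalClosure_coe] at hw
  refine closure_minimal (fun w hw => ?_) hclosed hw
  obtain ⟨v, hv, rfl⟩ := hw
  change ‖⟪f, M v⟫_𝕜‖ ≤ c * ‖W.starProjection (adjoint M f)‖ * ‖M v‖
  calc ‖⟪f, M v⟫_𝕜‖ = ‖⟪W.starProjection (adjoint M f), v⟫_𝕜‖ := by
        rw [W.inner_starProjection_left_eq_right, W.starProjection_eq_self_iff.mpr hv,
          ContinuousLinearMap.adjoint_inner_left]
    _ ≤ ‖W.starProjection (adjoint M f)‖ * (c * ‖M v‖) :=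
        (norm_inner_le_norm _ _).trans (by gcongr; exact hM v hv)
    _ = _ := by ring

theorem norm_starProjection_topologicalClosure_map_le [W.HasOrthogonalProjection]
    [(W.map (M : E →ₗ[𝕜] F)).topologicalClosure.HasOrthogonalProjection] {c : ℝ} (hc : 0 ≤ c)
    (hM : ∀ v ∈ W, ‖v‖ ≤ c * ‖M v‖) (f : F) :
    ‖(W.map (M : E →ₗ[𝕜] F)).topologicalClosure.starProjection f‖ ≤
      c * ‖W.starProjection (adjoint M f)‖ :=
  Submodule.norm_starProjection_le_of_forall_norm_inner_le _ (by positivity)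
    (norm_inner_le_of_mem_topologicalClosure_map M W hM f)

theorem adjoint_mem_orthogonal_of_mem_orthogonal_map {g : F}
    (hg : g ∈ (W.map (M : E →ₗ[𝕜] F))ᗮ) : adjoint M g ∈ Wᗮ := fun v hv => by
  rw [ContinuousLinearMap.adjoint_inner_right]
  exact hg (M v) ⟨v, hv, rfl⟩

theorem starProjection_adjoint_starProjection_topologicalClosure_map
    [W.HasOrthogonalProjection]
    [(W.map (M : E →ₗ[𝕜] F)).topologicalClosure.HasOrthogonalProjection] (f : F) :
    W.starProjection (adjoint M ((W.map (M : E →ₗ[𝕜] F)).topologicalClosure.starProjection f)) =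
      W.starProjection (adjoint M f) := by
  have hperp := (W.map (M : E →ₗ[𝕜] F)).orthogonal_closure ▸
    (W.map (M : E →ₗ[𝕜] F)).topologicalClosure.sub_starProjection_mem_orthogonal f
  have := W.starProjection_apply_eq_zero_iff.mpr
    (adjoint_mem_orthogonal_of_mem_orthogonal_map M W hperp)
  rwa [map_sub, map_sub, sub_eq_zero, eq_comm] at this

end Projection

section FusionFrame

variable {E F : Type*} [NormedAddCommGroup E] [InnerProductSpace ℂ E]
  [NormedAddCommGroup F] [InnerProductSpace ℂ F] {ι : Type*} {W : ι → Submodule ℂ E}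
  [∀ i, (W i).HasOrthogonalProjection] {ω : ι → ℝ} {S : E →L[ℂ] E}

theorem hasSum_mul_norm_sq_starProjection
    (hS : ∀ f, HasSum (fun i => ω i ^ 2 • (W i).starProjection f) (S f)) (f : E) :
    HasSum (fun i => ω i ^ 2 * ‖(W i).starProjection f‖ ^ 2) (RCLike.re ⟪S f, f⟫_ℂ) := by
  refine RCLike.hasSum_re ℂ ((innerSLFlip ℂ f).hasSum (hS f)) |>.congr_fun fun i => ?_
  rw [innerSLFlip_apply_apply, inner_smul_left_eq_smul, RCLike.smul_re,
    (W i).re_inner_starProjection_eq_normSq]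
  rfl

theorem isSymmetric_of_hasSum_smul_starProjection
    (hS : ∀ f, HasSum (fun i => ω i ^ 2 • (W i).starProjection f) (S f)) :
    (S : E →ₗ[ℂ] E).IsSymmetric := fun a b => by
  refine ((innerSLFlip ℂ b).hasSum (hS a)).unique
    ((innerSL ℂ a).hasSum (hS b) |>.congr_fun fun i => ?_)
  simp only [innerSLFlip_apply_apply, innerSL_apply_apply, inner_smul_left_eq_smul,
    inner_smul_right_eq_smul, (W i).inner_starProjection_left_eq_right]

theorem tsum_mul_norm_sq_starProjection_le {V : ι → Submodule ℂ F}
    [∀ i, (V i).HasOrthogonalProjection] {B c : ℝ} (T : F →L[ℂ] E) (hB : 0 ≤ B)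
    (hsum : ∀ f, Summable fun i => ω i ^ 2 * ‖(W i).starProjection f‖ ^ 2)
    (hBessel : ∀ f, ∑' i, ω i ^ 2 * ‖(W i).starProjection f‖ ^ 2 ≤ B * ‖f‖ ^ 2)
    (hle : ∀ i f, ‖(V i).starProjection f‖ ≤ c * ‖(W i).starProjection (T f)‖) (f : F) :
    ∑' i, ω i ^ 2 * ‖(V i).starProjection f‖ ^ 2 ≤ c ^ 2 * B * ‖T‖ ^ 2 * ‖f‖ ^ 2 := by
  have hterm : ∀ i, ω i ^ 2 * ‖(V i).starProjection f‖ ^ 2 ≤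
      c ^ 2 * (ω i ^ 2 * ‖(W i).starProjection (T f)‖ ^ 2) := fun i => by
    have := pow_le_pow_left₀ (norm_nonneg _) (hle i f) 2
    rw [mul_pow] at this
    nlinarith [sq_nonneg (ω i)]
  have hdom := (hsum (T f)).mul_left (c ^ 2)
  calc ∑' i, ω i ^ 2 * ‖(V i).starProjection f‖ ^ 2
      ≤ ∑' i, c ^ 2 * (ω i ^ 2 * ‖(W i).starProjection (T f)‖ ^ 2) :=
        Summable.tsum_le_tsum hterm (.of_nonneg_of_le (fun i => by positivity) hterm hdom) hdom
    _ ≤ c ^ 2 * (B * ‖T f‖ ^ 2) := by rw [tsum_mul_left]; gcongr; exact hBessel _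
    _ ≤ c ^ 2 * (B * (‖T‖ * ‖f‖) ^ 2) := by gcongr; exact T.le_opNorm f
    _ = c ^ 2 * B * ‖T‖ ^ 2 * ‖f‖ ^ 2 := by ring

theorem starProjection_range_apply_adjoint [CompleteSpace E] {K Sinv : E →L[ℂ] E}
    [CompleteSpace (LinearMap.range (K : E →ₗ[ℂ] E))] (hS : (S : E →ₗ[ℂ] E).IsSymmetric)
    (hinv : ∀ x ∈ LinearMap.range (K : E →ₗ[ℂ] E), Sinv (S x) = x) (f : E) :
    (LinearMap.range (K : E →ₗ[ℂ] E)).starProjection (S (adjoint Sinv (K f))) = K f := by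
  refine Submodule.eq_starProjection_of_mem_of_inner_eq_zero ⟨f, rfl⟩ ?_
  rintro _ ⟨x, rfl⟩
  rw [inner_sub_left, ContinuousLinearMap.coe_coe, ← ContinuousLinearMap.coe_coe S, hS,
    ContinuousLinearMap.coe_coe, ContinuousLinearMap.adjoint_inner_left, hinv (K x) ⟨x, rfl⟩,
    sub_self]

end FusionFrame

theorem canonical_K_dual_general {ι : Type*}
    (K S SWinv : H →L[ℂ] H) [CompleteSpace (LinearMap.range (K : H →ₗ[ℂ] H))]
    (W Wt : ι → Submodule ℂ H) [∀ i, CompleteSpace (W i)] [∀ i, CompleteSpace (Wt i)]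
    (ω : ι → ℝ) (B : ℝ) (hB : 0 < B)
    (hBessel : ∀ f : H, ∑' i, ω i ^ 2 * ‖proj (W i) f‖ ^ 2 ≤ B * ‖f‖ ^ 2)
    (hS : ∀ f : H, HasSum (fun i => ω i ^ 2 • proj (W i) f) (S f))
    (SWRK : Submodule ℂ H) [CompleteSpace SWRK]
    (hSWRK : SWRK = (LinearMap.range (K : H →ₗ[ℂ] H)).map (S : H →ₗ[ℂ] H))
    (hsub : ∀ i, W i ≤ SWRK)
    (hinv1 : ∀ x ∈ LinearMap.range (K : H →ₗ[ℂ] H), SWinv (S x) = x)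
    (hinv2 : ∀ y ∈ SWRK, S (SWinv y) = y)
    (hWt : ∀ i, Wt i = ((W i).map ((adjoint K ∘L SWinv ∘L proj SWRK : H →L[ℂ] H) : H →ₗ[ℂ] H)).topologicalClosure) :
    (∃ Bt : ℝ, 0 < Bt ∧ ∀ f : H, ∑' i, ω i ^ 2 * ‖proj (Wt i) f‖ ^ 2 ≤ Bt * ‖f‖ ^ 2) ∧
      ∀ f : H, HasSum (fun i => ω i ^ 2 •
        proj (LinearMap.range (K : H →ₗ[ℂ] H)) (proj (W i) (adjoint SWinv (K (proj (Wt i) f))))) (K f) := by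
  obtain rfl : Wt = _ := funext hWt
  simp only [proj_eq_starProjection] at *
  set M : H →L[ℂ] H := adjoint K ∘L SWinv ∘L SWRK.starProjection
  obtain ⟨C, hC0, hC⟩ := exists_norm_le_mul_norm_adjoint_of_mem_range K
  have hM : ∀ i, ∀ v ∈ W i, ‖v‖ ≤ ‖S‖ * C * ‖M v‖ := fun i v hv => by
    have hv' := hsub i hv
    have hbound :=
      norm_le_mul_norm_adjoint_apply_of_mem_map_range hC hinv1 (hSWRK ▸ hinv2) (hSWRK ▸ hv')
    simpa only [M, ContinuousLinearMap.comp_apply, SWRK.starProjection_eq_self_iff.mpr hv']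
      using hbound
  have hWM : ∀ i x, (W i).starProjection (adjoint M x) =
      (W i).starProjection (adjoint SWinv (K x)) := fun i x => by
    rw [show M = (adjoint K ∘L SWinv) ∘L SWRK.starProjection from rfl,
      Submodule.starProjection_adjoint_comp_starProjection_of_le (hsub i),
      ContinuousLinearMap.adjoint_comp, ContinuousLinearMap.adjoint_adjoint,
      ContinuousLinearMap.comp_apply]
  refine ⟨⟨max ((‖S‖ * C) ^ 2 * B * ‖adjoint M‖ ^ 2) 1, lt_max_of_lt_right one_pos,
    fun f => ?_⟩, fun f => ?_⟩
  · refine (tsum_mul_norm_sq_starProjection_le (adjoint M) hB.le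
      (fun g => (hasSum_mul_norm_sq_starProjection hS g).summable) hBessel
      (fun i => norm_starProjection_topologicalClosure_map_le M (W i) (by positivity) (hM i))
      f).trans ?_
    gcongr
    exact le_max_left _ _
  · have hsum := (LinearMap.range (K : H →ₗ[ℂ] H)).starProjection.hasSum
      (hS (adjoint SWinv (K f)))
    rw [starProjection_range_apply_adjoint (isSymmetric_of_hasSum_smul_starProjection hS)
      hinv1] at hsum
    refine hsum.congr_fun fun i => ?_
    rw [ContinuousLinearMap.map_smul_of_tower, ← hWM,
      starProjection_adjoint_starProjection_topologicalClosure_map, hWM]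

theorem canonical_K_dual {ι : Type*} [Countable ι]
    (K S SWinv : H →L[ℂ] H) [CompleteSpace (LinearMap.range (K : H →ₗ[ℂ] H))]
    (W Wt : ι → Submodule ℂ H) [∀ i, CompleteSpace (W i)] [∀ i, CompleteSpace (Wt i)]
    (ω : ι → ℝ) (hω : ∀ i, 0 < ω i) (B : ℝ) (hB : 0 < B)
    (hBessel : ∀ f : H, ∑' i, ω i ^ 2 * ‖proj (W i) f‖ ^ 2 ≤ B * ‖f‖ ^ 2)
    (hS : ∀ f : H, HasSum (fun i => ω i ^ 2 • proj (W i) f) (S f))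
    (SWRK : Submodule ℂ H) [CompleteSpace SWRK]
    (hSWRK : SWRK = (LinearMap.range (K : H →ₗ[ℂ] H)).map (S : H →ₗ[ℂ] H))
    (hsub : ∀ i, W i ≤ SWRK)
    (hinv1 : ∀ x ∈ LinearMap.range (K : H →ₗ[ℂ] H), SWinv (S x) = x)
    (hinv2 : ∀ y ∈ SWRK, S (SWinv y) = y)
    (hWt : ∀ i, Wt i = ((W i).map ((adjoint K ∘L SWinv ∘L proj SWRK : H →L[ℂ] H) : H →ₗ[ℂ] H)).topologicalClosure) :
    (∃ Bt : ℝ, 0 < Bt ∧ ∀ f : H, ∑' i, ω i ^ 2 * ‖proj (Wt i) f‖ ^ 2 ≤ Bt * ‖f‖ ^ 2) ∧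
      ∀ f : H, HasSum (fun i => ω i ^ 2 •
        proj (LinearMap.range (K : H →ₗ[ℂ] H)) (proj (W i) (adjoint SWinv (K (proj (Wt i) f))))) (K f) :=
  canonical_K_dual_general K S SWinv W Wt ω B hB hBessel hS SWRK hSWRK hsub hinv1 hinv2 hWt
end
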